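/- arXiv:1907.11201 — 4 statements merged into one kernel-verified Lean document; each statement's English description precedes it below -/
import Mathlib

section
/- Let Γ be a finite group, s : Z/2Z → Γ a homomorphism, and H a finite abelian group equipped with a Γ-action such that gcd(|H|,|Γ|) = 1 and H^Γ = 1. Then there exists a class triple (G,c,π) for s together with a Γ-equivariant isomorphism from ker π (with the conjugation action of Γ via preimages in G) to H, and any two class triples for s whose kernels are Γ-equivariantly isomorphic to H are isomorphic as class triples. -/
/-- `(G, c, π)` is a class triple for `s : ZMod 2 → Γ`:  `π` is surjective with abelian
kernel of order coprime to `|Γ|`, `π ∘ c = s`, the conjugation action of `Γ` (via preimages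
in `G`; equivalently of all of `G` since `π` is surjective) on `ker π` has trivial fixed
subgroup, and `im c ∩ ker π = 1`. -/
structure IsClassTriple {Γ G : Type*} [Group Γ] [Finite Γ] [Group G] [Finite G]
    (s : Multiplicative (ZMod 2) →* Γ) (π : G →* Γ)
    (c : Multiplicative (ZMod 2) →* G) : Prop where
  surjective : Function.Surjective π
  ker_comm : ∀ a b : π.ker, a * b = b * a
  coprime : Nat.Coprime (Nat.card π.ker) (Nat.card Γ)
  compat : π.comp c = s
  fixed_trivial : ∀ n : π.ker, (∀ g : G, g * (n : G) * g⁻¹ = (n : G)) → n = 1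
  range_inf_ker : c.range ⊓ π.ker = ⊥

/-- A bundled class triple for `s`. -/
structure ClassTriple (Γ : Type) [Group Γ] [Finite Γ]
    (s : Multiplicative (ZMod 2) →* Γ) : Type 1 where
  G : Type
  [grp : Group G]
  [fin : Finite G]
  π : G →* Γ
  c : Multiplicative (ZMod 2) →* G
  isTriple : IsClassTriple s π c

attribute [instance] ClassTriple.grp ClassTriple.fin

/-- A `Γ`-equivariant isomorphism from the kernel of a class triple (with the conjugation
action of `Γ` via preimages in `G`) to a `Γ`-group `H`. -/
def IsEquivariantKerIso {Γ : Type} [Group Γ] [Finite Γ] {s : Multiplicative (ZMod 2) →* Γ}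
    (T : ClassTriple Γ s) (H : Type) [CommGroup H] [MulDistribMulAction Γ H]
    (φ : T.π.ker ≃* H) : Prop :=
  ∀ (g : T.G) (n : T.π.ker),
    φ ⟨g * (n : T.G) * g⁻¹, T.π.normal_ker.conj_mem _ n.2 g⟩ = T.π g • φ n

namespace ClassTripleAux

open SemidirectProduct

instance {N G : Type*} [Group N] [Group G] [Finite N] [Finite G] {φ : G →* MulAut N} :
    Finite (N ⋊[φ] G) :=
  Finite.of_equiv (N × G) ⟨fun p => ⟨p.1, p.2⟩, fun a => (a.left, a.right),
    fun _ => rfl, fun _ => rfl⟩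

lemma card_sdp {N G : Type*} [Group N] [Group G] {φ : G →* MulAut N} :
    Nat.card (N ⋊[φ] G) = Nat.card N * Nat.card G := by
  rw [← Nat.card_prod]
  exact Nat.card_congr ⟨fun a => (a.left, a.right), fun p => ⟨p.1, p.2⟩,
    fun _ => rfl, fun _ => rfl⟩

variable {Γ : Type} [Group Γ] [Finite Γ] {s : Multiplicative (ZMod 2) →* Γ}
  (H : Type) [CommGroup H] [Finite H] [MulDistribMulAction Γ H]

lemma index_ker_eq (T : ClassTriple Γ s) : T.π.ker.index = Nat.card Γ := by
  rw [Subgroup.index_ker, MonoidHom.range_eq_top.2 T.isTriple.surjective, Subgroup.card_top]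

lemma card_G (T : ClassTriple Γ s) : Nat.card T.G = Nat.card T.π.ker * Nat.card Γ := by
  rw [← index_ker_eq T, Subgroup.card_mul_index]

lemma key (T : ClassTriple Γ s) (φ : T.π.ker ≃* H) (hφ : IsEquivariantKerIso T H φ) :
    ∃ τ : T.G ≃* (H ⋊[MulDistribMulAction.toMulAut Γ H] Γ),
      (∀ g, rightHom (τ g) = T.π g) ∧ ∀ x, τ (T.c x) = inr (s x) := by
  classical
  have hcard : Nat.card T.π.ker = Nat.card H := Nat.card_congr φ.toEquiv
  have hcop : Nat.Coprime (Nat.card T.π.ker) T.π.ker.index := by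
    rw [index_ker_eq T]; exact T.isTriple.coprime
  obtain ⟨K, hK⟩ := Subgroup.exists_right_complement'_of_coprime hcop
  -- the splitting `σ : Γ →* T.G`
  have hKcard : Nat.card K = Nat.card Γ := by
    have h1 := hK.card_mul
    rw [card_G T] at h1
    exact Nat.eq_of_mul_eq_mul_left Nat.card_pos h1
  have hinj : Function.Injective (T.π.comp K.subtype) := by
    rw [injective_iff_map_eq_one]
    intro k hk
    have hkk : (k : T.G) ∈ T.π.ker ⊓ K := ⟨hk, k.2⟩
    rw [hK.disjoint.eq_bot] at hkk
    exact Subtype.ext hkk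
  have hbij : Function.Bijective (T.π.comp K.subtype) :=
    (Nat.bijective_iff_injective_and_card _).2 ⟨hinj, hKcard⟩
  let e : K ≃* Γ := MulEquiv.ofBijective _ hbij
  let σ : Γ →* T.G := K.subtype.comp e.symm.toMonoidHom
  have hσ : ∀ γ, T.π (σ γ) = γ := fun γ => e.apply_symm_apply γ
  -- the lift `F : H ⋊ Γ →* T.G`
  let f₁ : H →* T.G := T.π.ker.subtype.comp φ.symm.toMonoidHom
  have hker₁ : ∀ h : H, f₁ h ∈ T.π.ker := fun h => (φ.symm h).2
  have hlift : ∀ γ : Γ, f₁.comp ((MulDistribMulAction.toMulAut Γ H) γ).toMonoidHom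
      = (MulAut.conj (σ γ)).toMonoidHom.comp f₁ := by
    intro γ
    ext h
    have hmem : σ γ * ((φ.symm h : T.π.ker) : T.G) * (σ γ)⁻¹ ∈ T.π.ker :=
      T.π.normal_ker.conj_mem _ (φ.symm h).2 (σ γ)
    have h2 : (⟨σ γ * ((φ.symm h : T.π.ker) : T.G) * (σ γ)⁻¹, hmem⟩ : T.π.ker)
        = φ.symm (γ • h) := by
      apply φ.injective
      rw [hφ (σ γ) (φ.symm h), MulEquiv.apply_symm_apply, MulEquiv.apply_symm_apply, hσ γ]
    have h3 := congrArg (fun n : T.π.ker => (n : T.G)) h2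
    simpa [f₁] using h3.symm
  let F : (H ⋊[MulDistribMulAction.toMulAut Γ H] Γ) →* T.G := lift f₁ σ hlift
  have hFa : ∀ a : H ⋊[MulDistribMulAction.toMulAut Γ H] Γ, F a = f₁ a.left * σ a.right := by
    intro a
    conv_lhs => rw [← inl_left_mul_inr_right a]
    rw [map_mul]
    simp [F]
  have hπF : ∀ a, T.π (F a) = a.right := by
    intro a
    rw [hFa, map_mul, hσ, MonoidHom.mem_ker.1 (hker₁ a.left), one_mul]
  have hFinj : Function.Injective F := by
    rw [injective_iff_map_eq_one]
    intro a ha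
    have hr : a.right = 1 := by rw [← hπF a, ha, map_one]
    have hl : f₁ a.left = 1 := by
      have := hFa a
      rw [ha, hr, map_one, mul_one] at this
      exact this.symm
    have hl' : a.left = 1 := by
      apply φ.symm.injective
      apply Subtype.ext
      simpa [f₁] using hl
    exact SemidirectProduct.ext hl' hr
  have hFbij : Function.Bijective F :=
    (Nat.bijective_iff_injective_and_card _).2
      ⟨hFinj, by rw [card_sdp, card_G T, hcard]⟩
  let τ₁ : T.G ≃* (H ⋊[MulDistribMulAction.toMulAut Γ H] Γ) :=
    (MulEquiv.ofBijective F hFbij).symm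
  have hτ₁F : ∀ a, τ₁ (F a) = a := fun a => (MulEquiv.ofBijective F hFbij).symm_apply_apply a
  have hπτ₁ : ∀ g, rightHom (τ₁ g) = T.π g := by
    intro g
    obtain ⟨a, rfl⟩ := hFbij.surjective g
    rw [hτ₁F, hπF]
    rfl
  -- correcting the order-2 section
  set x₀ : Multiplicative (ZMod 2) := Multiplicative.ofAdd 1 with hx₀
  have hπc : ∀ x, rightHom (τ₁ (T.c x)) = s x := by
    intro x
    rw [hπτ₁]
    exact DFunLike.congr_fun T.isTriple.compat x
  set b : H ⋊[MulDistribMulAction.toMulAut Γ H] Γ := τ₁ (T.c x₀) with hb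
  set h₀ : H := b.left with hh₀
  have hbr : b.right = s x₀ := hπc x₀
  have hsq : b * b = 1 := by
    rw [hb, ← map_mul, ← map_mul]
    have : x₀ * x₀ = 1 := by decide
    rw [this, map_one, map_one]
  have hrel : h₀ * (s x₀) • h₀ = 1 := by
    have := congrArg SemidirectProduct.left hsq
    rw [mul_left, hbr, one_left] at this
    exact this
  have hconj : (s x₀) • h₀ = h₀⁻¹ := by
    rw [← one_mul ((s x₀) • h₀), ← inv_mul_cancel h₀, mul_assoc, hrel, mul_one]
  have hodd : Odd (orderOf h₀) := by
    by_cases hγ : s x₀ = 1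
    · have hker : T.c x₀ ∈ T.π.ker := by
        rw [MonoidHom.mem_ker]
        exact (DFunLike.congr_fun T.isTriple.compat x₀).trans hγ
      have hcx : T.c x₀ ∈ T.c.range ⊓ T.π.ker := ⟨⟨x₀, rfl⟩, hker⟩
      rw [T.isTriple.range_inf_ker, Subgroup.mem_bot] at hcx
      have : h₀ = 1 := by rw [hh₀, hb, hcx, map_one]; rfl
      rw [this, orderOf_one]; exact odd_one
    · have hd : (s x₀) ^ 2 = 1 := by
        have := congrArg SemidirectProduct.right hsq
        rw [mul_right, hbr] at this
        rw [pow_two]; exact this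
      have h2 : orderOf (s x₀) = 2 :=
        (Nat.prime_two.eq_one_or_self_of_dvd _ (orderOf_dvd_of_pow_eq_one hd)).resolve_left
          (fun h => hγ (orderOf_eq_one_iff.1 h))
      have hΓeven : 2 ∣ Nat.card Γ := h2 ▸ orderOf_dvd_natCard (s x₀)
      have hcop2 : Nat.Coprime (Nat.card H) (Nat.card Γ) := hcard ▸ T.isTriple.coprime
      have hHodd : ¬ 2 ∣ Nat.card H := by
        intro hH
        have h1 : (2 : ℕ) ∣ 1 := hcop2 ▸ Nat.dvd_gcd hH hΓeven
        norm_num at h1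
      have hno : ¬ 2 ∣ orderOf h₀ := fun hdd => hHodd (hdd.trans (orderOf_dvd_natCard h₀))
      rw [Nat.odd_iff]
      omega
  obtain ⟨m, hm⟩ := hodd
  -- conjugating by `inl (h₀ ^ m)` normalizes the section
  set a : H := h₀ ^ m with ha
  have hsa : (s x₀) • a⁻¹ = a := by
    rw [ha, smul_inv', smul_pow', hconj, inv_pow, inv_inv]
  have hconjb : (MulAut.conj (inl a : H ⋊[MulDistribMulAction.toMulAut Γ H] Γ)) b
      = inr (s x₀) := by
    have hleft : ((inl a : H ⋊[MulDistribMulAction.toMulAut Γ H] Γ) * b * (inl a)⁻¹).left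
        = 1 := by
      simp only [mul_left, mul_right, inv_left, inv_right, left_inl, right_inl, map_one,
        inv_one, MulAut.one_apply, one_mul, mul_one, hbr]
      have : (MulDistribMulAction.toMulAut Γ H (s x₀)) a⁻¹ = s x₀ • a⁻¹ := rfl
      rw [this, hsa, ha]
      calc h₀ ^ m * h₀ * h₀ ^ m = h₀ ^ (m + 1 + m) := by rw [pow_add, pow_add, pow_one]
        _ = h₀ ^ (2 * m + 1) := by ring_nf
        _ = 1 := by rw [← hm, pow_orderOf_eq_one]
    have hright : ((inl a : H ⋊[MulDistribMulAction.toMulAut Γ H] Γ) * b * (inl a)⁻¹).right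
        = s x₀ := by
      simp only [mul_right, inv_right, right_inl, inv_one, one_mul, mul_one, hbr]
    exact SemidirectProduct.ext (by rw [MulAut.conj_apply]; rw [hleft]; rfl)
      (by rw [MulAut.conj_apply]; rw [hright]; rfl)
  refine ⟨τ₁.trans (MulAut.conj (inl a)), ?_, ?_⟩
  · intro g
    have : rightHom ((MulAut.conj (inl a : H ⋊[MulDistribMulAction.toMulAut Γ H] Γ)) (τ₁ g))
        = rightHom (τ₁ g) := by
      rw [MulAut.conj_apply, map_mul, map_mul, map_inv, rightHom_inl]
      simp
    simpa [this] using hπτ₁ g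
  · intro x
    have hcases : x = 1 ∨ x = x₀ := by
      rw [hx₀]; revert x; decide
    rcases hcases with rfl | rfl
    · simp
    · show (MulAut.conj (inl a)) (τ₁ (T.c x₀)) = inr (s x₀)
      rw [← hb, hconjb]

lemma exists_model (s : Multiplicative (ZMod 2) →* Γ)
    (hcop : Nat.Coprime (Nat.card H) (Nat.card Γ))
    (hfix : ∀ h : H, (∀ γ : Γ, γ • h = h) → h = 1) :
    ∃ T : ClassTriple Γ s, ∃ φ : T.π.ker ≃* H, IsEquivariantKerIso T H φ := by
  classical
  set G₀ := H ⋊[MulDistribMulAction.toMulAut Γ H] Γ with hG₀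
  let π₀ : G₀ →* Γ := rightHom
  let c₀ : Multiplicative (ZMod 2) →* G₀ := inr.comp s
  have hmem : ∀ n : π₀.ker, (n : G₀).right = 1 := fun n => n.2
  -- the kernel is isomorphic to `H`
  let κ : π₀.ker ≃* H :=
    { toFun := fun n => (n : G₀).left
      invFun := fun h => ⟨inl h, by rw [MonoidHom.mem_ker]; exact rightHom_inl h⟩
      left_inv := fun n => Subtype.ext
        (SemidirectProduct.ext (left_inl _) (by rw [right_inl]; exact (hmem n).symm))
      right_inv := fun h => left_inl h
      map_mul' := fun n₁ n₂ => by
        show ((n₁ : G₀) * n₂).left = (n₁ : G₀).left * (n₂ : G₀).left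
        rw [mul_left, hmem n₁, map_one, MulAut.one_apply] }
  have hcardker : Nat.card π₀.ker = Nat.card H := Nat.card_congr κ.toEquiv
  have hconj_left : ∀ (g : G₀) (n : π₀.ker),
      (g * (n : G₀) * g⁻¹).left = g.right • (n : G₀).left := by
    intro g n
    rw [mul_left, mul_left, inv_left, mul_right, hmem n, mul_one]
    show g.left * g.right • (n : G₀).left * g.right • (g.right⁻¹ • g.left⁻¹)
        = g.right • (n : G₀).left
    rw [smul_inv_smul, mul_comm g.left, mul_assoc, mul_inv_cancel, mul_one]
  have hT : IsClassTriple s π₀ c₀ := by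
    constructor
    · exact rightHom_surjective
    · intro a b
      apply Subtype.ext
      apply SemidirectProduct.ext
      · show ((a : G₀) * b).left = ((b : G₀) * a).left
        rw [mul_left, mul_left, hmem a, hmem b, map_one, MulAut.one_apply, MulAut.one_apply,
          mul_comm]
      · show ((a : G₀) * b).right = ((b : G₀) * a).right
        rw [mul_right, mul_right, hmem a, hmem b]
    · rw [hcardker]; exact hcop
    · show π₀.comp c₀ = s
      dsimp only [π₀, c₀]
      ext x
      rfl
    · intro n hn
      have hleft : (n : G₀).left = 1 := by
        apply hfix
        intro γ
        have := congrArg SemidirectProduct.left (hn (inr γ))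
        rw [hconj_left (inr γ) n, right_inr] at this
        exact this
      apply Subtype.ext
      exact SemidirectProduct.ext hleft (hmem n)
    · rw [eq_bot_iff]
      rintro x ⟨⟨y, rfl⟩, hx⟩
      have : s y = 1 := by
        have h2 : rightHom ((inr.comp s) y) = 1 := hx
        rwa [MonoidHom.comp_apply, rightHom_inr] at h2
      rw [Subgroup.mem_bot]
      show inr (s y) = 1
      rw [this, map_one]
  refine ⟨⟨G₀, π₀, c₀, hT⟩, κ, ?_⟩
  intro g n
  show (g * (n : G₀) * g⁻¹).left = rightHom g • (n : G₀).left
  exact hconj_left g n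

end ClassTripleAux

open ClassTripleAux in
theorem classTriple_exists_unique_of_ker {Γ : Type} [Group Γ] [Finite Γ]
    (s : Multiplicative (ZMod 2) →* Γ) (H : Type) [CommGroup H] [Finite H]
    [MulDistribMulAction Γ H]
    (hcop : Nat.Coprime (Nat.card H) (Nat.card Γ))
    (hfix : ∀ h : H, (∀ γ : Γ, γ • h = h) → h = 1) :
    (∃ T : ClassTriple Γ s, ∃ φ : T.π.ker ≃* H, IsEquivariantKerIso T H φ) ∧
      (∀ T₁ T₂ : ClassTriple Γ s,
        (∃ φ₁ : T₁.π.ker ≃* H, IsEquivariantKerIso T₁ H φ₁) →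
        (∃ φ₂ : T₂.π.ker ≃* H, IsEquivariantKerIso T₂ H φ₂) →
        ∃ τ : T₁.G ≃* T₂.G, (∀ g, T₂.π (τ g) = T₁.π g) ∧ ∀ x, τ (T₁.c x) = T₂.c x) := by
  constructor
  · exact exists_model H s hcop hfix
  · rintro T₁ T₂ ⟨φ₁, hφ₁⟩ ⟨φ₂, hφ₂⟩
    obtain ⟨ρ₁, hπ₁, hc₁⟩ := key H T₁ φ₁ hφ₁
    obtain ⟨ρ₂, hπ₂, hc₂⟩ := key H T₂ φ₂ hφ₂
    refine ⟨ρ₁.trans ρ₂.symm, ?_, ?_⟩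
    · intro g
      have h1 : T₂.π (ρ₂.symm (ρ₁ g)) = SemidirectProduct.rightHom (ρ₂ (ρ₂.symm (ρ₁ g))) :=
        (hπ₂ _).symm
      rw [MulEquiv.apply_symm_apply] at h1
      exact h1.trans (hπ₁ g)
    · intro x
      show ρ₂.symm (ρ₁ (T₁.c x)) = T₂.c x
      rw [hc₁ x, ← hc₂ x, MulEquiv.symm_apply_apply]
end

section
/- Let O be a discrete valuation ring with maximal ideal 𝔪 whose residue field is finite of cardinality q. For partitions λ and μ, let G_λ = ⊕_i O/𝔪^{λ_i} and G_μ = ⊕_j O/𝔪^{μ_j} be the O-modules of types λ and μ. Then the number of O-module homomorphisms from G_λ to G_μ is |Hom_O(G_λ, G_μ)| = q^{∑_{i≥1} λ'_i μ'_i}, where λ' and μ' denote the transpose partitions. -/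
open IsLocalRing

section Aux

variable (O : Type) [CommRing O] [IsDomain O] [IsDiscreteValuationRing O]

theorem mem_mpow_iff {ϖ : O} (hϖ : Irreducible ϖ) (n : ℕ) (x : O) :
    x ∈ maximalIdeal O ^ n ↔ ϖ ^ n ∣ x := by
  rw [(IsDiscreteValuationRing.irreducible_iff_uniformizer ϖ).mp hϖ,
    Ideal.span_singleton_pow, Ideal.mem_span_singleton]

theorem card_quot_pow (c : ℕ) :
    Nat.card (O ⧸ (maximalIdeal O ^ c)) = Nat.card (ResidueField O) ^ c := by
  induction c with
  | zero =>
    have : Subsingleton (O ⧸ (maximalIdeal O ^ 0)) := by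
      rw [Ideal.Quotient.subsingleton_iff]
      simp [Ideal.one_eq_top]
    rw [pow_zero]
    exact Nat.card_eq_one_iff_unique.mpr ⟨this, ⟨0⟩⟩
  | succ c ih =>
    obtain ⟨ϖ, hϖ⟩ := IsDiscreteValuationRing.exists_irreducible O
    set I : Ideal O := maximalIdeal O ^ (c+1) with hI
    set J : Ideal O := maximalIdeal O ^ c with hJ
    have hle : I ≤ J := Ideal.pow_le_pow_right (by omega)
    let ψ : (O ⧸ I) →ₗ[O] (O ⧸ J) := Submodule.mapQ I J LinearMap.id hle
    have hψmk : ∀ y : O, ψ (Submodule.Quotient.mk y) = Submodule.Quotient.mk y := fun y => by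
      rfl
    have hψsurj : Function.Surjective ψ := by
      rintro ⟨y⟩
      exact ⟨Submodule.Quotient.mk y, rfl⟩
    let g : O →ₗ[O] (O ⧸ I) := I.mkQ.comp (LinearMap.toSpanSingleton O O (ϖ ^ c))
    have hrange : LinearMap.range g = LinearMap.ker ψ := by
      ext x
      constructor
      · rintro ⟨r, rfl⟩
        have hmem : (r • ϖ ^ c : O) ∈ J := by
          rw [mem_mpow_iff O hϖ, smul_eq_mul]
          exact Dvd.dvd.mul_left dvd_rfl r
        show g r ∈ LinearMap.ker ψ
        have : g r = Submodule.Quotient.mk (r • ϖ ^ c) := rfl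
        rw [LinearMap.mem_ker, this, hψmk, Submodule.Quotient.mk_eq_zero]
        exact hmem
      · intro hx
        obtain ⟨y, rfl⟩ := Submodule.Quotient.mk_surjective I x
        rw [LinearMap.mem_ker, hψmk, Submodule.Quotient.mk_eq_zero] at hx
        have hy := hx
        rw [mem_mpow_iff O hϖ] at hy
        obtain ⟨r, rfl⟩ := hy
        exact ⟨r, by simp [g, mul_comm, smul_eq_mul]⟩
    have hker : LinearMap.ker g = maximalIdeal O := by
      ext r
      have : (r • ϖ ^ c ∈ I) ↔ ϖ ∣ r := by
        rw [mem_mpow_iff O hϖ, smul_eq_mul, pow_succ, mul_comm r (ϖ^c),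
          mul_dvd_mul_iff_left (pow_ne_zero c hϖ.ne_zero)]
      simp only [LinearMap.mem_ker, g, LinearMap.comp_apply, LinearMap.toSpanSingleton_apply,
        Submodule.mkQ_apply, Submodule.Quotient.mk_eq_zero]
      rw [this, ← Ideal.mem_span_singleton,
        ← (IsDiscreteValuationRing.irreducible_iff_uniformizer ϖ).mp hϖ]
    have e1 : (O ⧸ maximalIdeal O) ≃ₗ[O] LinearMap.ker ψ := by
      rw [← hker, ← hrange]
      exact g.quotKerEquivRange
    have e2 : ((O ⧸ I) ⧸ LinearMap.ker ψ) ≃ₗ[O] (O ⧸ J) := ψ.quotKerEquivOfSurjective hψsurj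
    have hmul : Nat.card (O ⧸ I) =
        Nat.card ((O ⧸ I) ⧸ LinearMap.ker ψ) * Nat.card (LinearMap.ker ψ) :=
      AddSubgroup.card_eq_card_quotient_mul_card_addSubgroup (LinearMap.ker ψ).toAddSubgroup
    rw [hmul, Nat.card_congr e2.toEquiv, Nat.card_congr e1.toEquiv.symm, ih, pow_succ]
    rfl

/-- Hom out of a quotient is the annihilated submodule. -/
noncomputable def homQuotEquiv (I : Ideal O) (M : Type) [AddCommGroup M] [Module O M] :
    ((O ⧸ I) →ₗ[O] M) ≃ {x : M // ∀ r ∈ I, r • x = 0} where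
  toFun φ := ⟨φ (Submodule.Quotient.mk 1), by
    intro r hr
    rw [← map_smul, ← Submodule.Quotient.mk_smul, smul_eq_mul, mul_one]
    rw [show (Submodule.Quotient.mk r : O ⧸ I) = 0 from (Submodule.Quotient.mk_eq_zero I).mpr hr,
      map_zero]⟩
  invFun x := Submodule.liftQ I (LinearMap.toSpanSingleton O M x.1) (by
    intro r hr
    simpa [LinearMap.toSpanSingleton_apply] using x.2 r hr)
  left_inv φ := by
    apply LinearMap.ext
    intro z
    obtain ⟨r, rfl⟩ := Submodule.Quotient.mk_surjective I z
    rw [Submodule.liftQ_apply, LinearMap.toSpanSingleton_apply, ← map_smul,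
      ← Submodule.Quotient.mk_smul, smul_eq_mul, mul_one]
  right_inv x := by
    ext
    show (Submodule.liftQ I (LinearMap.toSpanSingleton O M x.1) _) (Submodule.Quotient.mk 1) = x.1
    rw [Submodule.liftQ_apply, LinearMap.toSpanSingleton_apply, one_smul]

theorem card_hom_cyclic (a b : ℕ) :
    Nat.card ((O ⧸ (maximalIdeal O ^ a)) →ₗ[O] (O ⧸ (maximalIdeal O ^ b))) =
      Nat.card (ResidueField O) ^ min a b := by
  obtain ⟨ϖ, hϖ⟩ := IsDiscreteValuationRing.exists_irreducible O
  set c := min a b with hc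
  set I : Ideal O := maximalIdeal O ^ a with hI
  set J : Ideal O := maximalIdeal O ^ b with hJ
  let g : O →ₗ[O] (O ⧸ J) := J.mkQ.comp (LinearMap.toSpanSingleton O O (ϖ ^ (b - c)))
  have hg : ∀ r : O, g r = Submodule.Quotient.mk (r • ϖ ^ (b - c)) := fun r => rfl
  have hset : ∀ x : O ⧸ J, (∀ r ∈ I, r • x = 0) ↔ x ∈ LinearMap.range g := by
    intro x
    obtain ⟨y, rfl⟩ := Submodule.Quotient.mk_surjective J x
    constructor
    · intro h
      have h1 : (ϖ ^ a • (Submodule.Quotient.mk y) : O ⧸ J) = 0 :=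
        h (ϖ ^ a) ((mem_mpow_iff O hϖ a _).mpr dvd_rfl)
      rw [← Submodule.Quotient.mk_smul, Submodule.Quotient.mk_eq_zero,
        mem_mpow_iff O hϖ, smul_eq_mul] at h1
      have hdvd : ϖ ^ (b - c) ∣ y := by
        rcases le_total b a with hba | hab
        · have hbc : b - c = 0 := by omega
          rw [hbc, pow_zero]
          exact one_dvd y
        · have hca : c = a := by omega
          rw [hca]
          rcases h1 with ⟨t, ht⟩
          have hb : ϖ ^ b = ϖ ^ a * ϖ ^ (b - a) := by rw [← pow_add]; congr 1; omega
          rw [hb, mul_assoc] at ht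
          exact ⟨t, mul_left_cancel₀ (pow_ne_zero a hϖ.ne_zero) ht⟩
      obtain ⟨r, rfl⟩ := hdvd
      exact ⟨r, by rw [hg, smul_eq_mul, mul_comm]⟩
    · rintro ⟨r, hr⟩
      intro s hs
      rw [← hr, hg, ← Submodule.Quotient.mk_smul, Submodule.Quotient.mk_eq_zero,
        mem_mpow_iff O hϖ]
      rw [mem_mpow_iff O hϖ] at hs
      have hb : ϖ ^ b = ϖ ^ c * ϖ ^ (b - c) := by rw [← pow_add]; congr 1; omega
      rw [smul_eq_mul, smul_eq_mul, hb]
      exact mul_dvd_mul ((pow_dvd_pow ϖ (min_le_left a b)).trans hs) (Dvd.dvd.mul_left dvd_rfl r)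
  have hker : LinearMap.ker g = maximalIdeal O ^ c := by
    ext r
    rw [LinearMap.mem_ker, hg, Submodule.Quotient.mk_eq_zero, mem_mpow_iff O hϖ,
      mem_mpow_iff O hϖ, smul_eq_mul]
    constructor
    · rintro ⟨t, ht⟩
      have hb : ϖ ^ b = ϖ ^ (b - c) * ϖ ^ c := by rw [← pow_add]; congr 1; omega
      rw [hb, mul_comm r _, mul_assoc] at ht
      exact ⟨t, mul_left_cancel₀ (pow_ne_zero _ hϖ.ne_zero) ht⟩
    · rintro ⟨t, rfl⟩
      have hb : ϖ ^ b = ϖ ^ c * ϖ ^ (b - c) := by rw [← pow_add]; congr 1; omega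
      exact ⟨t, by rw [hb]; ring⟩
  have e1 : ((O ⧸ I) →ₗ[O] (O ⧸ J)) ≃ {x : O ⧸ J // ∀ r ∈ I, r • x = 0} := homQuotEquiv O I _
  have e2 : {x : O ⧸ J // ∀ r ∈ I, r • x = 0} ≃ LinearMap.range g :=
    Equiv.subtypeEquivRight hset
  have e3 : (O ⧸ (maximalIdeal O ^ c)) ≃ₗ[O] LinearMap.range g := by
    rw [← hker]
    exact g.quotKerEquivRange
  rw [Nat.card_congr (e1.trans (e2.trans e3.toEquiv.symm))]
  exact card_quot_pow O c

end Aux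

noncomputable def directSumLequivPi (R : Type) [Semiring R] (A : ℕ → Type)
    [∀ i, AddCommMonoid (A i)] [∀ i, Module R (A i)] (N : ℕ)
    (h : ∀ i, N ≤ i → Subsingleton (A i)) :
    DirectSum ℕ A ≃ₗ[R] ((i : Fin N) → A i.1) := by
  have key : ∀ (v : (i : Fin N) → A i.1) (j : ℕ),
      DirectSum.component R ℕ A j (∑ i : Fin N, DirectSum.lof R ℕ A i.1 (v i)) =
        if hj : j < N then v ⟨j, hj⟩ else 0 := by
    intro v j
    rw [map_sum]
    by_cases hj : j < N
    · rw [dif_pos hj, Finset.sum_eq_single (⟨j, hj⟩ : Fin N)]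
      · exact DirectSum.component.lof_self ..
      · intro i _ hne
        rw [DirectSum.component.of, dif_neg (by simpa [Fin.ext_iff] using hne)]
      · simp
    · rw [dif_neg hj]
      apply Finset.sum_eq_zero
      intro i _
      rw [DirectSum.component.of, dif_neg (by omega)]
  exact LinearEquiv.ofLinear
    (LinearMap.pi fun i : Fin N => DirectSum.component R ℕ A i.1)
    (∑ i : Fin N, (DirectSum.lof R ℕ A i.1).comp (LinearMap.proj i))
    (by
      apply LinearMap.ext; intro v
      funext j
      have : ((LinearMap.pi fun i : Fin N => DirectSum.component R ℕ A i.1).comp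
          (∑ i : Fin N, (DirectSum.lof R ℕ A i.1).comp (LinearMap.proj i))) v j
          = DirectSum.component R ℕ A j.1 (∑ i : Fin N, DirectSum.lof R ℕ A i.1 (v i)) := by
        simp [LinearMap.pi_apply, LinearMap.sum_apply]
      rw [LinearMap.id_apply, this, key, dif_pos j.2])
    (by
      apply LinearMap.ext; intro x
      apply DirectSum.ext_component R
      intro j
      have hx : ((∑ i : Fin N, (DirectSum.lof R ℕ A i.1).comp (LinearMap.proj i)).comp
          (LinearMap.pi fun i : Fin N => DirectSum.component R ℕ A i.1)) x
          = ∑ i : Fin N, DirectSum.lof R ℕ A i.1 (DirectSum.component R ℕ A i.1 x) := by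
        simp [LinearMap.sum_apply]
      rw [hx, key]
      by_cases hj : j < N
      · rw [dif_pos hj]
        rfl
      · rw [dif_neg hj]
        haveI := h j (by omega)
        exact Subsingleton.elim _ _)

/-- Maps into a product of modules are products of maps. -/
def homPiEquiv (R M : Type) [Semiring R] [AddCommMonoid M] [Module R M]
    {ι : Type} (B : ι → Type) [∀ j, AddCommMonoid (B j)] [∀ j, Module R (B j)] :
    (M →ₗ[R] ((j : ι) → B j)) ≃ ((j : ι) → (M →ₗ[R] B j)) where
  toFun f j := (LinearMap.proj j).comp f
  invFun g := LinearMap.pi g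
  left_inv f := LinearMap.ext fun x => funext fun j => rfl
  right_inv g := rfl

/-- The `(j+1)`-st part of the transpose (conjugate) partition of `l`:
`l'_{j+1} = #{i : l i ≥ j+1}`. -/
noncomputable def conjPart (l : ℕ → ℕ) (j : ℕ) : ℕ :=
  Nat.card {i : ℕ // j + 1 ≤ l i}

theorem conj_sum (l m : ℕ → ℕ) (hl : Antitone l) (N : ℕ)
    (hlN : ∀ i, N ≤ i → l i = 0) (hmN : ∀ i, N ≤ i → m i = 0) :
    ∑ i ∈ Finset.range N, ∑ j ∈ Finset.range N, min (l i) (m j)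
      = ∑ k ∈ Finset.range (l 0), conjPart l k * conjPart m k := by
  have hconj : ∀ (f : ℕ → ℕ), (∀ i, N ≤ i → f i = 0) → ∀ k : ℕ,
      conjPart f k = ∑ i ∈ Finset.range N, (if k + 1 ≤ f i then 1 else 0) := by
    intro f hf k
    rw [← Finset.card_filter, conjPart]
    have e : {i : ℕ // k + 1 ≤ f i} ≃
        {i : ℕ // i ∈ (Finset.range N).filter (fun i => k + 1 ≤ f i)} := by
      apply Equiv.subtypeEquivRight
      intro i
      simp only [Finset.mem_filter, Finset.mem_range]
      constructor
      · intro h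
        refine ⟨?_, h⟩
        by_contra hi
        push_neg at hi
        have := hf i (by omega)
        omega
      · tauto
    rw [Nat.card_congr e, Nat.card_eq_finsetCard]
  have hmin : ∀ i j : ℕ, min (l i) (m j) =
      ∑ k ∈ Finset.range (l 0),
        (if k + 1 ≤ l i then 1 else 0) * (if k + 1 ≤ m j then 1 else 0) := by
    intro i j
    have h0 : l i ≤ l 0 := hl (Nat.zero_le i)
    have hp : ∀ k : ℕ, (if k + 1 ≤ l i then 1 else 0) * (if k + 1 ≤ m j then 1 else 0)
        = if (k + 1 ≤ l i ∧ k + 1 ≤ m j) then 1 else 0 := by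
      intro k
      by_cases h1 : k + 1 ≤ l i <;> by_cases h2 : k + 1 ≤ m j <;> simp [h1, h2]
    simp_rw [hp]
    rw [← Finset.card_filter,
      show (Finset.range (l 0)).filter (fun k => k + 1 ≤ l i ∧ k + 1 ≤ m j)
        = Finset.range (min (l i) (m j)) by
          ext k
          simp only [Finset.mem_filter, Finset.mem_range]
          omega,
      Finset.card_range]
  calc
    ∑ i ∈ Finset.range N, ∑ j ∈ Finset.range N, min (l i) (m j)
        = ∑ i ∈ Finset.range N, ∑ j ∈ Finset.range N, ∑ k ∈ Finset.range (l 0),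
            (if k + 1 ≤ l i then 1 else 0) * (if k + 1 ≤ m j then 1 else 0) := by
          exact Finset.sum_congr rfl fun i _ => Finset.sum_congr rfl fun j _ => hmin i j
    _ = ∑ k ∈ Finset.range (l 0), ∑ i ∈ Finset.range N, ∑ j ∈ Finset.range N,
            (if k + 1 ≤ l i then 1 else 0) * (if k + 1 ≤ m j then 1 else 0) := by
          rw [Finset.sum_congr rfl fun i (_ : i ∈ Finset.range N) => Finset.sum_comm]
          exact Finset.sum_comm
    _ = ∑ k ∈ Finset.range (l 0), conjPart l k * conjPart m k := by
          refine Finset.sum_congr rfl fun k _ => ?_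
          rw [hconj l hlN k, hconj m hmN k, Finset.sum_mul_sum]

/-- The `O`-module `G_l = ⊕_i O/𝔪^{l i}` of type `l`, for a local ring `O` with
maximal ideal `𝔪`. -/
def typeModule (O : Type) [CommRing O] [IsLocalRing O] (l : ℕ → ℕ) : Type :=
  DirectSum ℕ fun i => O ⧸ (IsLocalRing.maximalIdeal O ^ (l i))

noncomputable instance (O : Type) [CommRing O] [IsLocalRing O] (l : ℕ → ℕ) :
    AddCommGroup (typeModule O l) := by unfold typeModule; infer_instance

noncomputable instance (O : Type) [CommRing O] [IsLocalRing O] (l : ℕ → ℕ) :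
    Module O (typeModule O l) := by unfold typeModule; infer_instance

/-- For a discrete valuation ring `O` with finite residue field of cardinality `q` and
partitions `l`, `m`, the number of `O`-module homomorphisms `G_l → G_m` is
`q ^ (∑_j l'_j m'_j)`. -/
theorem card_hom_typeModule (O : Type) [CommRing O] [IsDomain O] [IsDiscreteValuationRing O]
    [Finite (IsLocalRing.ResidueField O)]
    (l m : ℕ → ℕ) (hl : Antitone l) (hm : Antitone m)
    (hl0 : ∃ N, ∀ i ≥ N, l i = 0) (hm0 : ∃ N, ∀ i ≥ N, m i = 0) :
    Nat.card (typeModule O l →ₗ[O] typeModule O m) =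
      Nat.card (IsLocalRing.ResidueField O) ^
        (∑ j ∈ Finset.range (l 0), conjPart l j * conjPart m j) := by
  obtain ⟨N1, h1⟩ := hl0
  obtain ⟨N2, h2⟩ := hm0
  set N := max N1 N2 with hN
  have hlN : ∀ i, N ≤ i → l i = 0 := fun i hi => h1 i (le_trans (le_max_left _ _) hi)
  have hmN : ∀ i, N ≤ i → m i = 0 := fun i hi => h2 i (le_trans (le_max_right _ _) hi)
  have hsub : ∀ (f : ℕ → ℕ), (∀ i, N ≤ i → f i = 0) →
      ∀ i, N ≤ i → Subsingleton (O ⧸ (maximalIdeal O ^ f i)) := by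
    intro f hf i hi
    rw [Ideal.Quotient.subsingleton_iff, hf i hi]
    simp [Ideal.one_eq_top]
  have eL : typeModule O l ≃ₗ[O] ((i : Fin N) → O ⧸ (maximalIdeal O ^ l i.1)) :=
    directSumLequivPi O (fun i => O ⧸ (maximalIdeal O ^ l i)) N (hsub l hlN)
  have eM : typeModule O m ≃ₗ[O] ((j : Fin N) → O ⧸ (maximalIdeal O ^ m j.1)) :=
    directSumLequivPi O (fun j => O ⧸ (maximalIdeal O ^ m j)) N (hsub m hmN)
  have E : (typeModule O l →ₗ[O] typeModule O m) ≃
      ((i : Fin N) → (j : Fin N) →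
        ((O ⧸ (maximalIdeal O ^ l i.1)) →ₗ[O] (O ⧸ (maximalIdeal O ^ m j.1)))) :=
    (LinearEquiv.arrowCongr eL eM).toEquiv.trans
      (((LinearMap.lsum O (fun i : Fin N => O ⧸ (maximalIdeal O ^ l i.1)) O).symm.toEquiv).trans
        (Equiv.piCongrRight fun i => homPiEquiv O _ _))
  rw [Nat.card_congr E, Nat.card_pi]
  have : ∀ i : Fin N,
      Nat.card ((j : Fin N) →
        ((O ⧸ (maximalIdeal O ^ l i.1)) →ₗ[O] (O ⧸ (maximalIdeal O ^ m j.1))))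
      = Nat.card (ResidueField O) ^ (∑ j : Fin N, min (l i.1) (m j.1)) := by
    intro i
    rw [Nat.card_pi]
    rw [Finset.prod_congr rfl fun j (_ : j ∈ Finset.univ) => card_hom_cyclic O (l i.1) (m j.1)]
    rw [Finset.prod_pow_eq_pow_sum]
  rw [Finset.prod_congr rfl fun i (_ : i ∈ Finset.univ) => this i,
    Finset.prod_pow_eq_pow_sum]
  congr 1
  rw [Fin.sum_univ_eq_sum_range (fun i => ∑ j : Fin N, min (l i) (m j)),
    Finset.sum_congr rfl fun i (_ : i ∈ Finset.range N) =>
      Fin.sum_univ_eq_sum_range (fun j => min (l i) (m j)) N]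
  exact conj_sum l m hl N hlN hmN
end

section
/- Let Γ be a finite group, Γ' a subgroup, and p a prime. If the central idempotent e_{Γ/Γ'} lies in ℤ_(p)[Γ] (i.e., all of its coefficients are p-integral), then p does not divide the index [Γ:Γ']. Equivalently: if e₁ lies in the left ℤ_(p)[Γ]-module ℤ_(p)[Γ]·e₁' ⊆ ℚ[Γ], then p ∤ [Γ:Γ']. -/
/-- The idempotent `|Λ|⁻¹ ∑_{γ ∈ Λ} γ` of `ℚ[Γ]` attached to a subgroup `Λ ≤ Γ`.
For `Λ = ⊤` this is `e₁`, and for `Λ = Γ'` it is `e₁'`. -/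
noncomputable def subgroupIdem {Γ : Type} [Group Γ] [Finite Γ] (Λ : Subgroup Γ) :
    MonoidAlgebra ℚ Γ :=
  letI : Fintype ↥Λ := Fintype.ofFinite _
  (Nat.card ↥Λ : ℚ)⁻¹ • ∑ γ : ↥Λ, MonoidAlgebra.of ℚ Γ (γ : Γ)

/-- `e` is the central idempotent `e_{Γ/Γ'}` of `ℚ[Γ]` attached to the augmentation
character of the `Γ`-action on `Γ/Γ'`: it is the minimal central idempotent with
`e·e₁ = 0` and `e·e₁' = e₁' - e₁`. -/
def IsAugmentationIdem {Γ : Type} [Group Γ] [Finite Γ] (Γ' : Subgroup Γ)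
    (e : MonoidAlgebra ℚ Γ) : Prop :=
  (e * e = e ∧ ∀ x, e * x = x * e) ∧
    e * subgroupIdem (⊤ : Subgroup Γ) = 0 ∧
    e * subgroupIdem Γ' = subgroupIdem Γ' - subgroupIdem (⊤ : Subgroup Γ) ∧
    ∀ f : MonoidAlgebra ℚ Γ, (f * f = f ∧ ∀ x, f * x = x * f) →
      f * subgroupIdem (⊤ : Subgroup Γ) = 0 →
      f * subgroupIdem Γ' = subgroupIdem Γ' - subgroupIdem (⊤ : Subgroup Γ) →
      e * f = e

/-!
The coefficient of `1` in `e·e₁' = e₁' - e₁`, multiplied by `|Γ'|`, reads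
`∑_{γ ∈ Γ'} e(γ⁻¹) = 1 - |Γ'|/|Γ|`, i.e. `[Γ:Γ']⁻¹ = 1 - ∑_{γ ∈ Γ'} e(γ⁻¹)`.
The right-hand side lies in `ℤ_(p) = (Rat.padicValuation p).integer` when the coefficients of `e` do,
and `n⁻¹ ∈ ℤ_(p)` exactly when `p ∤ n`.
-/

section subgroupIdem

variable {Γ : Type} [Group Γ] [Finite Γ]

lemma coeff_one_mul_subgroupIdem (Λ : Subgroup Γ) (x : MonoidAlgebra ℚ Γ) :
    letI : Fintype ↥Λ := Fintype.ofFinite _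
    (x * subgroupIdem Λ).coeff 1 = (Nat.card ↥Λ : ℚ)⁻¹ * ∑ γ : ↥Λ, x.coeff (γ : Γ)⁻¹ := by
  let : Fintype ↥Λ := Fintype.ofFinite _
  simp only [subgroupIdem, mul_smul_comm, Finset.mul_sum, MonoidAlgebra.of_apply,
    MonoidAlgebra.coeff_smul, MonoidAlgebra.coeff_sum, Finsupp.smul_apply, Finset.sum_apply',
    MonoidAlgebra.coeff_mul_single_apply, one_mul, mul_one, smul_eq_mul]

lemma coeff_one_subgroupIdem (Λ : Subgroup Γ) :
    (subgroupIdem Λ).coeff 1 = (Nat.card ↥Λ : ℚ)⁻¹ := by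
  classical
  let : Fintype ↥Λ := Fintype.ofFinite _
  rw [← one_mul (subgroupIdem Λ), coeff_one_mul_subgroupIdem, MonoidAlgebra.one_def,
    Finset.sum_eq_single_of_mem 1 (Finset.mem_univ _)]
  · simp
  · intro γ _ hγ
    simpa [MonoidAlgebra.coeff_single, Finsupp.single_apply, eq_comm (a := (1 : Γ))] using hγ

lemma inv_index_eq_one_sub_sum_coeff {Γ' : Subgroup Γ} {e : MonoidAlgebra ℚ Γ}
    (he : e * subgroupIdem Γ' = subgroupIdem Γ' - subgroupIdem ⊤) :
    letI : Fintype ↥Γ' := Fintype.ofFinite _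
    (Γ'.index : ℚ)⁻¹ = 1 - ∑ γ : ↥Γ', e.coeff (γ : Γ)⁻¹ := by
  let : Fintype ↥Γ' := Fintype.ofFinite _
  have hcoeff := congrArg (MonoidAlgebra.coeff · 1) he
  simp only [MonoidAlgebra.coeff_sub, Finsupp.sub_apply, coeff_one_mul_subgroupIdem,
    coeff_one_subgroupIdem, Subgroup.card_top, ← Γ'.card_mul_index, Nat.cast_mul] at hcoeff
  have hcard : (Nat.card ↥Γ' : ℚ) ≠ 0 := Nat.cast_ne_zero.2 Nat.card_pos.ne'
  have hindex : (Γ'.index : ℚ) ≠ 0 := Nat.cast_ne_zero.2 Subgroup.index_ne_zero_of_finite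
  field_simp at hcoeff ⊢
  linarith

end subgroupIdem

lemma Rat.inv_natCast_mem_padicValuation_integer_iff {p : ℕ} [Fact p.Prime] {n : ℕ}
    (hn : n ≠ 0) : (n : ℚ)⁻¹ ∈ (Rat.padicValuation p).integer ↔ ¬ p ∣ n := by
  rw [Valuation.mem_integer_iff, Rat.padicValuation_le_one_iff,
    Rat.inv_natCast_den_of_pos (Nat.pos_of_ne_zero hn)]

/-- If all coefficients of `e_{Γ/Γ'}` are `p`-integral, then `p` does not divide the
index `[Γ:Γ']`. -/
theorem not_dvd_index_of_augIdem_integral {Γ : Type} [Group Γ] [Finite Γ]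
    (Γ' : Subgroup Γ) (p : ℕ) (hp : p.Prime) (e : MonoidAlgebra ℚ Γ)
    (he : IsAugmentationIdem Γ' e) (hint : ∀ γ : Γ, ¬ (p : ℕ) ∣ (e.coeff γ).den) :
    ¬ p ∣ Γ'.index := by
  have : Fact p.Prime := ⟨hp⟩
  have hcoeff (γ : Γ) : e.coeff γ ∈ (Rat.padicValuation p).integer :=
    Rat.padicValuation_le_one_iff.2 (hint γ)
  rw [← Rat.inv_natCast_mem_padicValuation_integer_iff Subgroup.index_ne_zero_of_finite,
    inv_index_eq_one_sub_sum_coeff he.2.2.1]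
  exact sub_mem (one_mem _) (sum_mem fun γ _ => hcoeff _)
end

section
/- Let K₀ ⊆ K ⊆ L be a tower of number fields with L|K₀ Galois with group Γ and K the fixed field of the subgroup Γ' of Γ, and let p be a prime that is good for e_{Γ/Γ'}. Then p does not divide [K:K₀], and there is a split short exact sequence 1 → Cl_{K|K₀}[p^∞] → Cl_K[p^∞] → Cl_{K₀}[p^∞] → 1, where the surjection is induced by the ideal norm from K to K₀ and a splitting is given (after viewing Cl_{K₀}[p^∞] inside Cl_K[p^∞] via extension of ideals) by [K:K₀]⁻¹·i_*. Consequently Cl_K[p^∞] ≅ Cl_{K₀}[p^∞] × Cl_{K|K₀}[p^∞]. -/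
noncomputable section

open NumberField
open scoped nonZeroDivisors

/-- The set `e·ℤ_(p)[Γ] ⊆ ℚ[Γ]`, for a central idempotent `e` with `p`-integral
coefficients. -/
def eZpSet (p : ℕ) {Γ : Type} [Group Γ] (e : MonoidAlgebra ℚ Γ) :
    Set (MonoidAlgebra ℚ Γ) :=
  {x | (∀ γ : Γ, ¬ p ∣ (x.coeff γ).den) ∧ e * x = x}

/-- `p` is a good prime for the central idempotent `e` of `ℚ[Γ]`. -/
def IsGoodPrime (p : ℕ) {Γ : Type} [Group Γ] (e : MonoidAlgebra ℚ Γ) : Prop :=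
  (∀ γ : Γ, ¬ p ∣ (e.coeff γ).den) ∧
    ∀ O : Set (MonoidAlgebra ℚ Γ), eZpSet p e ⊆ O → (∀ x ∈ O, e * x = x) → e ∈ O →
      (∀ x ∈ O, ∀ y ∈ O, x + y ∈ O) → (∀ x ∈ O, -x ∈ O) →
      (∀ x ∈ O, ∀ y ∈ O, x * y ∈ O) →
      (∀ q : ℚ, ¬ p ∣ q.den → ∀ x ∈ O, q • x ∈ O) →
      (∃ (n : ℕ) (t : Fin n → MonoidAlgebra ℚ Γ), (∀ i, t i ∈ O) ∧
        ∀ x ∈ O, ∃ c : Fin n → ℚ, (∀ i, ¬ p ∣ (c i).den) ∧ x = ∑ i, c i • t i) →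
      O = eZpSet p e


/-! ### Auxiliary lemmas -/

section Helpers

lemma den_sum_not_dvd {ι : Type*} {p : ℕ} (hp : p.Prime) (s : Finset ι) (f : ι → ℚ)
    (h : ∀ i ∈ s, ¬ p ∣ (f i).den) : ¬ p ∣ (∑ i ∈ s, f i).den := by
  classical
  induction s using Finset.cons_induction with
  | empty => simpa using hp.one_lt.ne'
  | cons a s ha ih =>
    rw [Finset.sum_cons]
    intro hd
    have := (Nat.Prime.dvd_mul hp).mp (hd.trans (Rat.add_den_dvd _ _))
    rcases this with h1 | h2
    · exact h a (Finset.mem_cons_self a s) h1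
    · exact ih (fun i hi => h i (Finset.mem_cons_of_mem hi)) h2

open scoped Classical in
lemma subgroupIdem_apply {Γ : Type} [Group Γ] [Finite Γ] (Λ : Subgroup Γ) (γ₀ : Γ) :
    (subgroupIdem Λ).coeff γ₀ = (Nat.card ↥Λ : ℚ)⁻¹ * (if γ₀ ∈ Λ then 1 else 0) := by
  rw [subgroupIdem]
  letI : Fintype ↥Λ := Fintype.ofFinite _
  rw [MonoidAlgebra.coeff_smul_apply, MonoidAlgebra.coeff_sum, Finsupp.finset_sum_apply, smul_eq_mul]
  congr 1
  by_cases h : γ₀ ∈ Λ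
  · rw [if_pos h]
    rw [Finset.sum_eq_single (⟨γ₀, h⟩ : ↥Λ)]
    · simp [MonoidAlgebra.of_apply, MonoidAlgebra.single_apply]
    · intro b _ hb
      simp only [MonoidAlgebra.of_apply, MonoidAlgebra.single_apply]
      rw [if_neg]
      intro hc
      exact hb (Subtype.ext hc)
    · intro hmem; exact absurd (Finset.mem_univ _) hmem
  · rw [if_neg h]
    apply Finset.sum_eq_zero
    intro b _
    simp only [MonoidAlgebra.of_apply, MonoidAlgebra.single_apply]
    rw [if_neg]
    rintro rfl
    exact h b.2

lemma card_smul_mul_subgroupIdem_den {Γ : Type} [Group Γ] [Finite Γ] {p : ℕ} (hp : p.Prime)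
    (e : MonoidAlgebra ℚ Γ) (he : ∀ γ : Γ, ¬ p ∣ (e.coeff γ).den) (Λ : Subgroup Γ) (γ₀ : Γ) :
    ¬ p ∣ (((Nat.card ↥Λ : ℚ) • (e * subgroupIdem Λ)).coeff γ₀).den := by
  classical
  letI : Fintype ↥Λ := Fintype.ofFinite _
  have hc : (Nat.card ↥Λ : ℚ) ≠ 0 := by
    exact_mod_cast Nat.card_pos.ne'
  have h1 : (Nat.card ↥Λ : ℚ) • (e * subgroupIdem Λ)
      = ∑ γ : ↥Λ, e * MonoidAlgebra.of ℚ Γ (γ : Γ) := by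
    rw [subgroupIdem]
    rw [mul_smul_comm, smul_smul, mul_inv_cancel₀ hc, one_smul, Finset.mul_sum]
  rw [h1, MonoidAlgebra.coeff_sum, Finsupp.finset_sum_apply]
  apply den_sum_not_dvd hp
  intro γ _
  have : (e * MonoidAlgebra.of ℚ Γ (γ : Γ)).coeff γ₀ = e.coeff (γ₀ * (γ : Γ)⁻¹) * 1 :=
    MonoidAlgebra.coeff_mul_single_apply e 1 _ _
  rw [this, mul_one]
  exact he _

lemma good_prime_not_dvd {Γ : Type} [Group Γ] [Finite Γ] {p : ℕ} (hp : p.Prime)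
    (Γ' : Subgroup Γ) (e : MonoidAlgebra ℚ Γ)
    (he₂ : e * subgroupIdem Γ' = subgroupIdem Γ' - subgroupIdem (⊤ : Subgroup Γ))
    (hden : ∀ γ : Γ, ¬ p ∣ (e.coeff γ).den) {n : ℕ}
    (hn : Nat.card Γ = n * Nat.card ↥Γ') : ¬ p ∣ n := by
  intro hpn
  have hctop : Nat.card ↥(⊤ : Subgroup Γ) = Nat.card Γ :=
    Nat.card_congr Subgroup.topEquiv.toEquiv
  have hc' : 0 < Nat.card ↥Γ' := Nat.card_pos
  have hc : 0 < Nat.card Γ := Nat.card_pos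
  have hn0 : 0 < n := by
    rcases Nat.eq_zero_or_pos n with h | h
    · rw [h, zero_mul] at hn; omega
    · exact h
  have hΓ'top : Γ' ≠ ⊤ := by
    intro h
    have : Nat.card ↥Γ' = Nat.card Γ := by rw [h]; exact hctop
    have hn1 : n = 1 := by
      rw [this] at hn
      nlinarith [hn, hc]
    rw [hn1] at hpn
    exact hp.one_lt.ne' (Nat.dvd_one.mp hpn)
  obtain ⟨γ₀, hγ₀⟩ : ∃ γ₀ : Γ, γ₀ ∉ Γ' := by
    by_contra h
    push_neg at h
    exact hΓ'top ((Subgroup.eq_top_iff' Γ').mpr h)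
  have key := card_smul_mul_subgroupIdem_den hp e hden Γ' γ₀
  rw [he₂] at key
  have hcq : (Nat.card ↥(⊤ : Subgroup Γ) : ℚ) = (n : ℚ) * (Nat.card ↥Γ' : ℚ) := by
    exact_mod_cast hctop.trans hn
  have hval : (((Nat.card ↥Γ' : ℚ)) • (subgroupIdem Γ' - subgroupIdem (⊤ : Subgroup Γ))).coeff γ₀
      = -(n : ℚ)⁻¹ := by
    rw [MonoidAlgebra.coeff_smul_apply, MonoidAlgebra.coeff_sub, Finsupp.sub_apply, subgroupIdem_apply, subgroupIdem_apply,
      if_neg hγ₀, if_pos (Subgroup.mem_top γ₀), smul_eq_mul, hcq]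
    have h1 : (n : ℚ) ≠ 0 := by exact_mod_cast hn0.ne'
    have h2 : (Nat.card ↥Γ' : ℚ) ≠ 0 := by exact_mod_cast hc'.ne'
    field_simp
    ring
  rw [hval] at key
  apply key
  rw [Rat.neg_den, Rat.inv_natCast_den_of_pos hn0]
  exact hpn

lemma card_gal_eq_finrank_mul (K₀ K L : Type) [Field K₀] [Field K]
    [Field L] [Algebra K₀ K] [Algebra K L] [Algebra K₀ L]
    [IsScalarTower K₀ K L] [IsGalois K₀ L] [FiniteDimensional K₀ L]
    (Γ' : Subgroup (L ≃ₐ[K₀] L))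
    (hΓ' : ∀ σ : L ≃ₐ[K₀] L, σ ∈ Γ' ↔ ∀ x : K, σ (algebraMap K L x) = algebraMap K L x) :
    Nat.card (L ≃ₐ[K₀] L) = Module.finrank K₀ K * Nat.card ↥Γ' := by
  haveI : IsGalois K L := IsGalois.tower_top_of_isGalois K₀ K L
  haveI : FiniteDimensional K L := FiniteDimensional.right K₀ K L
  have hcard : Nat.card ↥Γ' = Nat.card (L ≃ₐ[K] L) := by
    refine Nat.card_congr ⟨fun σ => AlgEquiv.ofRingEquiv (f := (σ : L ≃ₐ[K₀] L).toRingEquiv)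
        (fun x => (hΓ' _).mp σ.2 x),
      fun τ => ⟨AlgEquiv.ofRingEquiv (f := τ.toRingEquiv)
        (fun x => by
          rw [IsScalarTower.algebraMap_apply K₀ K L]
          exact τ.commutes _),
        (hΓ' _).mpr (fun x => τ.commutes x)⟩, ?_, ?_⟩
    · intro σ; ext; rfl
    · intro τ; ext; rfl
  rw [hcard,
    IsGalois.card_aut_eq_finrank K₀ L, IsGalois.card_aut_eq_finrank K L,
    ← Module.finrank_mul_finrank K₀ K L]

lemma span_finset_eq_span_singleton {R : Type*} [CommRing R]
    (total : ∀ a b : R, a ∣ b ∨ b ∣ a) (s : Finset R) (hs : s.Nonempty) :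
    ∃ x ∈ s, Ideal.span (s : Set R) = Ideal.span {x} := by
  classical
  induction hs using Finset.Nonempty.cons_induction with
  | singleton a => exact ⟨a, Finset.mem_singleton_self a, by simp⟩
  | cons a s ha hs ih =>
    obtain ⟨x, hxs, hx⟩ := ih
    have hins : Ideal.span (↑(Finset.cons a s ha) : Set R) = Ideal.span {a} ⊔ Ideal.span ↑s := by
      rw [Finset.coe_cons, Ideal.span_insert]
    rcases total x a with h | h
    · refine ⟨x, Finset.mem_cons_of_mem hxs, ?_⟩
      rw [hins, hx, sup_eq_right.mpr]
      rw [Ideal.span_singleton_le_span_singleton]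
      exact h
    · refine ⟨a, Finset.mem_cons_self a s, ?_⟩
      rw [hins, hx, sup_eq_left.mpr]
      rw [Ideal.span_singleton_le_span_singleton]
      exact h

lemma primary_map {G H : Type*} [CommGroup G] [CommGroup H] (p : ℕ) [Fact p.Prime] (f : G →* H)
    {x : G} (hx : x ∈ CommGroup.primaryComponent G p) :
    f x ∈ CommGroup.primaryComponent H p := by
  obtain ⟨k, hk⟩ := hx
  exact ⟨k, by rw [← map_pow, hk, map_one]⟩

end Helpers

section NormOfExtension

open NumberField
open scoped nonZeroDivisors

variable (K₀ K : Type) [Field K₀] [NumberField K₀] [Field K] [NumberField K] [Algebra K₀ K]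

lemma intNorm_algebraMap_ringOfIntegers (x : 𝓞 K₀) :
    Algebra.intNorm (𝓞 K₀) (𝓞 K) (algebraMap (𝓞 K₀) (𝓞 K) x) = x ^ Module.finrank K₀ K := by
  apply IsFractionRing.injective (𝓞 K₀) K₀
  rw [Algebra.algebraMap_intNorm (K := K₀) (L := K), map_pow,
    ← IsScalarTower.algebraMap_apply (𝓞 K₀) (𝓞 K) K,
    IsScalarTower.algebraMap_apply (𝓞 K₀) K₀ K]
  exact Algebra.norm_algebraMap ((algebraMap (𝓞 K₀) K₀) x)

set_option maxHeartbeats 1000000 in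
set_option synthInstance.maxHeartbeats 1000000 in
lemma spanIntNorm_map (I : Ideal (𝓞 K₀)) (hI : I ≠ ⊥) :
    Ideal.span (Algebra.intNorm (𝓞 K₀) (𝓞 K) ''
        ((I.map (algebraMap (𝓞 K₀) (𝓞 K)) : Ideal (𝓞 K)) : Set (𝓞 K)))
      = I ^ Module.finrank K₀ K := by
  classical
  set R := 𝓞 K₀
  set S := 𝓞 K
  set n := Module.finrank K₀ K with hn
  refine Ideal.eq_of_localization_maximal (fun P hPmax => ?_)
  have hP0 : P ≠ ⊥ := by
    rintro rfl
    apply RingOfIntegers.not_isField K₀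
    constructor
    · exact exists_pair_ne R
    · exact mul_comm
    · intro a ha
      have hspan : Ideal.span {a} = ⊤ := by
        by_contra hne
        have hb := hPmax.eq_of_le hne bot_le
        exact ha (Ideal.span_singleton_eq_bot.mp hb.symm)
      have h1 : (1 : 𝓞 K₀) ∈ Ideal.span {a} := hspan.symm ▸ Submodule.mem_top
      obtain ⟨b, hb⟩ := Ideal.mem_span_singleton'.mp h1
      exact ⟨b, by rw [mul_comm] at hb; exact hb⟩
  set M := P.primeCompl
  set Rₚ := Localization.AtPrime P
  set Sₚ := Localization (Algebra.algebraMapSubmonoid S M)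
  letI : Algebra Rₚ Sₚ := localizationAlgebra M S
  haveI : IsScalarTower R Rₚ Sₚ := IsScalarTower.of_algebraMap_eq'
    (by rw [RingHom.algebraMap_toAlgebra, IsLocalization.map_comp, ← IsScalarTower.algebraMap_eq])
  have hM : M ≤ R⁰ := P.primeCompl_le_nonZeroDivisors
  have hMS : Algebra.algebraMapSubmonoid S M ≤ S⁰ :=
    Submonoid.map_le_of_le_comap _ <| hM.trans
      (nonZeroDivisors_le_comap_nonZeroDivisors_of_injective _
        (FaithfulSMul.algebraMap_injective R S))
  haveI : IsDomain Sₚ := IsLocalization.isDomain_of_le_nonZeroDivisors Sₚ hMS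
  haveI : IsDedekindDomain Rₚ := IsLocalization.isDedekindDomain R hM _
  haveI : IsDedekindDomain Sₚ := IsLocalization.isDedekindDomain S hMS _
  haveI : IsDiscreteValuationRing Rₚ :=
    IsLocalization.AtPrime.isDiscreteValuationRing_of_dedekind_domain R hP0 Rₚ
  haveI : Module.Finite Rₚ Sₚ := Module.Finite.of_isLocalization R S M
  haveI : IsLocalization (M.map (algebraMap R S)) Sₚ :=
    inferInstanceAs (IsLocalization (Algebra.algebraMapSubmonoid S M) Sₚ)
  haveI : Module.IsTorsionFree Rₚ Sₚ := by
    rw [Module.isTorsionFree_iff_algebraMap_injective]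
    rw [RingHom.algebraMap_toAlgebra]
    exact IsLocalization.map_injective_of_injective M Rₚ Sₚ
      (FaithfulSMul.algebraMap_injective R S)
  haveI : CharZero Rₚ := charZero_of_injective_algebraMap (IsLocalization.injective Rₚ hM)
  haveI : CharZero (FractionRing Rₚ) :=
    inferInstance
  haveI : IsIntegrallyClosed Rₚ := inferInstance
  haveI : IsIntegrallyClosed Sₚ := inferInstance
  -- generator of the localized ideal coming from I
  obtain ⟨sI, hsI⟩ : I.FG := IsNoetherian.noetherian I
  have hsIne : sI.Nonempty := by
    rcases Finset.eq_empty_or_nonempty sI with h | h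
    · exfalso; apply hI; rw [← hsI, h]; simp
    · exact h
  have himgne : (sI.image (algebraMap R Rₚ)).Nonempty := hsIne.image _
  obtain ⟨y₀, hy₀mem, hy₀span⟩ := span_finset_eq_span_singleton
    (fun a b => ValuationRing.dvd_total a b) (sI.image (algebraMap R Rₚ)) himgne
  obtain ⟨x₀, hx₀s, rfl⟩ := Finset.mem_image.mp hy₀mem
  have hx₀I : x₀ ∈ I := by rw [← hsI]; exact Ideal.subset_span hx₀s
  have hPmap : I.map (algebraMap R Rₚ) = Ideal.span {algebraMap R Rₚ x₀} := by
    rw [← hsI, Ideal.map_span, ← Finset.coe_image, hy₀span]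
  -- localized intNorm identity
  have hloc : ∀ x : S, algebraMap R Rₚ (Algebra.intNorm R S x)
      = Algebra.intNorm Rₚ Sₚ (algebraMap S Sₚ x) := fun x =>
    Algebra.intNorm_eq_of_isLocalization (A := R) (B := S) (Aₘ := Rₚ) (Bₘ := Sₚ) M x
  have hgen : Algebra.intNorm Rₚ Sₚ (algebraMap S Sₚ (algebraMap R S x₀))
      = (algebraMap R Rₚ x₀) ^ n := by
    rw [← hloc, intNorm_algebraMap_ringOfIntegers K₀ K, map_pow]
  -- the ideal J upstairs localizes to a principal ideal
  have hSgen : (I.map (algebraMap R S)).map (algebraMap S Sₚ)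
      = Ideal.span {algebraMap S Sₚ (algebraMap R S x₀)} := by
    rw [Ideal.map_map, ← IsScalarTower.algebraMap_eq, IsScalarTower.algebraMap_eq R Rₚ Sₚ,
      ← Ideal.map_map, hPmap, Ideal.map_span, Set.image_singleton,
      ← IsScalarTower.algebraMap_apply, ← IsScalarTower.algebraMap_apply R S Sₚ]
  -- now compute both sides
  rw [Ideal.map_pow, hPmap, Ideal.span_singleton_pow, Ideal.map_span, Set.image_image]
  apply le_antisymm
  · rw [Ideal.span_le]
    rintro _ ⟨x, hxJ, rfl⟩
    have hx : algebraMap S Sₚ x ∈ (I.map (algebraMap R S)).map (algebraMap S Sₚ) :=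
      Ideal.mem_map_of_mem _ hxJ
    rw [hSgen, Ideal.mem_span_singleton] at hx
    obtain ⟨c, hc⟩ := hx
    simp only [SetLike.mem_coe, Ideal.mem_span_singleton]
    rw [hloc, hc, map_mul, hgen]
    exact dvd_mul_right _ _
  · rw [Ideal.span_singleton_le_iff_mem]
    have hmem : algebraMap R S x₀ ∈ I.map (algebraMap R S) := Ideal.mem_map_of_mem _ hx₀I
    have : ((algebraMap R Rₚ x₀) ^ n)
        = algebraMap R Rₚ (Algebra.intNorm R S (algebraMap R S x₀)) := by
      rw [intNorm_algebraMap_ringOfIntegers K₀ K, map_pow]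
    rw [this]
    exact Ideal.subset_span ⟨algebraMap R S x₀, hmem, rfl⟩

end NormOfExtension

set_option maxHeartbeats 2000000 in
set_option synthInstance.maxHeartbeats 400000 in
/-- Theorem 7.4(i):  in a tower `K₀ ⊆ K ⊆ L` with `L|K₀` Galois with group `Γ` and
`K = L^{Γ'}`, if `p` is good for `e_{Γ/Γ'}` then `p ∤ [K:K₀]`, and the `p`-primary part
of `Cl_K` splits as the product of the `p`-primary parts of `Cl_{K₀}` and of the
relative class group `Cl_{K|K₀}` (the kernel of the norm), with the norm-induced
surjection split by `[K:K₀]⁻¹ · i_*`. -/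
theorem classGroup_pPrimary_splits
    (K₀ K L : Type) [Field K₀] [NumberField K₀] [Field K] [NumberField K]
    [Field L] [NumberField L] [Algebra K₀ K] [Algebra K L] [Algebra K₀ L]
    [IsScalarTower K₀ K L] [IsGalois K₀ L] [FiniteDimensional K₀ L]
    (Γ' : Subgroup (L ≃ₐ[K₀] L))
    (hΓ' : ∀ σ : L ≃ₐ[K₀] L, σ ∈ Γ' ↔ ∀ x : K, σ (algebraMap K L x) = algebraMap K L x)
    (hfix : ∀ y : L, (∀ σ ∈ Γ', σ y = y) → ∃ x : K, algebraMap K L x = y)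
    (e : MonoidAlgebra ℚ (L ≃ₐ[K₀] L)) (he : IsAugmentationIdem Γ' e)
    (p : ℕ) [Fact p.Prime] (hp : IsGoodPrime p e)
    (nmK : ClassGroup (𝓞 K) →* ClassGroup (𝓞 K₀))
    (hnmK : ∀ (I : (Ideal (𝓞 K))⁰)
      (h : Ideal.span (Algebra.intNorm (𝓞 K₀) (𝓞 K) ''
              ((I : Ideal (𝓞 K)) : Set (𝓞 K))) ∈ (Ideal (𝓞 K₀))⁰),
      nmK (ClassGroup.mk0 I) = ClassGroup.mk0 ⟨_, h⟩)
    (iK : ClassGroup (𝓞 K₀) →* ClassGroup (𝓞 K))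
    (hiK : ∀ (I : (Ideal (𝓞 K₀))⁰)
      (h : Ideal.map (algebraMap (𝓞 K₀) (𝓞 K)) (I : Ideal (𝓞 K₀)) ∈ (Ideal (𝓞 K))⁰),
      iK (ClassGroup.mk0 I) = ClassGroup.mk0 ⟨_, h⟩) :
    ¬ p ∣ Module.finrank K₀ K ∧
    (∀ x ∈ CommGroup.primaryComponent (ClassGroup (𝓞 K)) p,
      nmK x ∈ CommGroup.primaryComponent (ClassGroup (𝓞 K₀)) p) ∧
    (∀ y ∈ CommGroup.primaryComponent (ClassGroup (𝓞 K₀)) p,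
      iK y ∈ CommGroup.primaryComponent (ClassGroup (𝓞 K)) p ∧
      nmK ((iK y) ^
        (((Module.finrank K₀ K : ZMod
            (Nat.card ↥(CommGroup.primaryComponent (ClassGroup (𝓞 K₀)) p))))⁻¹).val) = y) ∧
    Nonempty
      (↥(CommGroup.primaryComponent (ClassGroup (𝓞 K)) p) ≃*
        ↥(CommGroup.primaryComponent (ClassGroup (𝓞 K₀)) p) ×
          ↥(CommGroup.primaryComponent (ClassGroup (𝓞 K)) p ⊓ nmK.ker)) := by
  have hpPrime : p.Prime := Fact.out
  have hpn : ¬ p ∣ Module.finrank K₀ K :=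
    good_prime_not_dvd hpPrime Γ' e he.2.2.1 hp.1 (card_gal_eq_finrank_mul K₀ K L Γ' hΓ')
  -- The composite `nmK ∘ iK` is raising to the `[K:K₀]`-th power.
  have hni : ∀ c : ClassGroup (𝓞 K₀), nmK (iK c) = c ^ Module.finrank K₀ K := by
    intro c
    obtain ⟨I, rfl⟩ := ClassGroup.mk0_surjective c
    have hI0 : (I : Ideal (𝓞 K₀)) ≠ ⊥ := by
      have h := mem_nonZeroDivisors_iff_ne_zero.mp I.2
      simpa using h
    have hJ0 : Ideal.map (algebraMap (𝓞 K₀) (𝓞 K)) (I : Ideal (𝓞 K₀)) ≠ ⊥ :=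
      fun h => hI0 ((Ideal.map_eq_bot_iff_of_injective
        (FaithfulSMul.algebraMap_injective (𝓞 K₀) (𝓞 K))).mp h)
    have hJmem : Ideal.map (algebraMap (𝓞 K₀) (𝓞 K)) (I : Ideal (𝓞 K₀)) ∈ (Ideal (𝓞 K))⁰ :=
      mem_nonZeroDivisors_iff_ne_zero.mpr (by simpa using hJ0)
    have hkey := spanIntNorm_map K₀ K (I : Ideal (𝓞 K₀)) hI0
    have hNmem : Ideal.span (Algebra.intNorm (𝓞 K₀) (𝓞 K) ''
        ((Ideal.map (algebraMap (𝓞 K₀) (𝓞 K)) (I : Ideal (𝓞 K₀)) : Ideal (𝓞 K)) : Set (𝓞 K)))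
        ∈ (Ideal (𝓞 K₀))⁰ := by
      rw [hkey]
      refine mem_nonZeroDivisors_iff_ne_zero.mpr ?_
      have h4 : (I : Ideal (𝓞 K₀)) ^ Module.finrank K₀ K ≠ ⊥ := by
        apply pow_ne_zero
        simpa using hI0
      simpa using h4
    rw [hiK I hJmem, hnmK ⟨_, hJmem⟩ hNmem]
    have heq : (⟨_, hNmem⟩ : (Ideal (𝓞 K₀))⁰) = I ^ Module.finrank K₀ K := by
      apply Subtype.ext
      rw [SubmonoidClass.coe_pow]
      exact hkey
    rw [heq, map_pow]
  -- abbreviations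
  set A := CommGroup.primaryComponent (ClassGroup (𝓞 K)) p with hA
  set B := CommGroup.primaryComponent (ClassGroup (𝓞 K₀)) p with hB
  set N := Nat.card ↥B with hN
  haveI : NeZero N := ⟨Nat.card_pos.ne'⟩
  obtain ⟨k, hkcard⟩ := IsPGroup.iff_card.mp
    (CommGroup.primaryComponent.isPGroup (G := ClassGroup (𝓞 K₀)) (p := p))
  have hcop : Nat.Coprime (Module.finrank K₀ K) N := by
    rw [hN, hB, hkcard]
    exact Nat.Coprime.pow_right _ (Nat.coprime_comm.mp (hpPrime.coprime_iff_not_dvd.mpr hpn))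
  set m := ((Module.finrank K₀ K : ZMod N))⁻¹ with hm
  have hmval : (Module.finrank K₀ K) * m.val ≡ 1 [MOD N] := by
    have hu : IsUnit ((Module.finrank K₀ K : ℕ) : ZMod N) :=
      (ZMod.isUnit_iff_coprime _ N).mpr hcop
    have h2 : ((Module.finrank K₀ K * m.val : ℕ) : ZMod N) = ((1 : ℕ) : ZMod N) := by
      push_cast
      rw [ZMod.natCast_val, ZMod.cast_id, hm, ZMod.mul_inv_of_unit _ hu]
    exact (ZMod.natCast_eq_natCast_iff _ _ _).mp h2
  have hsplit : ∀ y ∈ B, nmK ((iK y) ^ m.val) = y := by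
    intro y hy
    rw [map_pow, hni, ← pow_mul]
    have hyord : orderOf y ∣ N := by
      have h1 : orderOf (⟨y, hy⟩ : ↥B) = orderOf y := Subgroup.orderOf_mk y hy
      rw [← h1, hN]
      exact orderOf_dvd_natCard _
    have h5 := Nat.ModEq.of_dvd hyord hmval
    calc y ^ (Module.finrank K₀ K * m.val) = y ^ 1 := pow_eq_pow_iff_modEq.mpr h5
      _ = y := pow_one y
  -- the splitting maps
  let ν : ↥A →* ↥B := MonoidHom.codRestrict (nmK.comp A.subtype) B
    (fun a => primary_map p nmK a.2)
  let σ : ↥B →* ↥A := MonoidHom.codRestrict ((powMonoidHom m.val).comp (iK.comp B.subtype)) A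
    (fun b => Subgroup.pow_mem _ (primary_map p iK b.2) _)
  have hνσ : ∀ b : ↥B, ν (σ b) = b := fun b => Subtype.ext (hsplit (b : ClassGroup (𝓞 K₀)) b.2)
  have hmem2 : ∀ a : ↥A, ((a : ClassGroup (𝓞 K)) * ((σ (ν a) : ↥A) : ClassGroup (𝓞 K))⁻¹)
      ∈ A ⊓ nmK.ker := by
    intro a
    refine Subgroup.mem_inf.mpr ⟨A.mul_mem a.2 (A.inv_mem (σ (ν a)).2), ?_⟩
    rw [MonoidHom.mem_ker, map_mul, map_inv]
    have h3 : nmK ((σ (ν a) : ↥A) : ClassGroup (𝓞 K)) = nmK (a : ClassGroup (𝓞 K)) :=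
      congrArg Subtype.val (hνσ (ν a))
    rw [h3, mul_inv_cancel]
  refine ⟨hpn, fun x hx => primary_map p nmK hx,
    fun y hy => ⟨primary_map p iK hy, hsplit y hy⟩, ⟨?_⟩⟩
  refine
    { toFun := fun a => (ν a, ⟨(a : ClassGroup (𝓞 K)) * ((σ (ν a) : ↥A) : ClassGroup (𝓞 K))⁻¹,
        hmem2 a⟩),
      invFun := fun z => ⟨((σ z.1 : ↥A) : ClassGroup (𝓞 K)) * (z.2 : ClassGroup (𝓞 K)),
        A.mul_mem (σ z.1).2 (Subgroup.mem_inf.mp z.2.2).1⟩,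
      left_inv := ?_, right_inv := ?_, map_mul' := ?_ }
  · intro a
    apply Subtype.ext
    show ((σ (ν a) : ↥A) : ClassGroup (𝓞 K)) *
      ((a : ClassGroup (𝓞 K)) * ((σ (ν a) : ↥A) : ClassGroup (𝓞 K))⁻¹) = (a : ClassGroup (𝓞 K))
    rw [mul_comm ((σ (ν a) : ↥A) : ClassGroup (𝓞 K)), mul_assoc, inv_mul_cancel, mul_one]
  · rintro ⟨b, c⟩
    have hc := Subgroup.mem_inf.mp c.2
    have hX : ∀ (w : ↥A), (w : ClassGroup (𝓞 K)) = ((σ b : ↥A) : ClassGroup (𝓞 K)) *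
        (c : ClassGroup (𝓞 K)) → ν w = b := by
      intro w hw
      apply Subtype.ext
      show nmK (w : ClassGroup (𝓞 K)) = (b : ClassGroup (𝓞 K₀))
      have h6 : nmK ((σ b : ↥A) : ClassGroup (𝓞 K)) = (b : ClassGroup (𝓞 K₀)) :=
        congrArg Subtype.val (hνσ b)
      rw [hw, map_mul, h6, MonoidHom.mem_ker.mp hc.2, mul_one]
    set w : ↥A := ⟨((σ b : ↥A) : ClassGroup (𝓞 K)) * (c : ClassGroup (𝓞 K)),
      A.mul_mem (σ b).2 hc.1⟩ with hwdef
    have hνw : ν w = b := hX w rfl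
    refine Prod.ext ?_ ?_
    · show ν _ = b
      exact hνw
    · apply Subtype.ext
      show ((w : ClassGroup (𝓞 K)) * ((σ (ν w) : ↥A) : ClassGroup (𝓞 K))⁻¹)
        = (c : ClassGroup (𝓞 K))
      rw [hνw]
      show (((σ b : ↥A) : ClassGroup (𝓞 K)) * (c : ClassGroup (𝓞 K))) *
        ((σ b : ↥A) : ClassGroup (𝓞 K))⁻¹ = (c : ClassGroup (𝓞 K))
      rw [mul_comm ((σ b : ↥A) : ClassGroup (𝓞 K)) (c : ClassGroup (𝓞 K)),
        mul_inv_cancel_right]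
  · intro a₁ a₂
    refine Prod.ext ?_ ?_
    · exact map_mul ν a₁ a₂
    · apply Subtype.ext
      show ((a₁ * a₂ : ↥A) : ClassGroup (𝓞 K)) *
          ((σ (ν (a₁ * a₂)) : ↥A) : ClassGroup (𝓞 K))⁻¹
        = ((a₁ : ClassGroup (𝓞 K)) * ((σ (ν a₁) : ↥A) : ClassGroup (𝓞 K))⁻¹) *
          ((a₂ : ClassGroup (𝓞 K)) * ((σ (ν a₂) : ↥A) : ClassGroup (𝓞 K))⁻¹)
      rw [map_mul ν, map_mul σ, Subgroup.coe_mul, Subgroup.coe_mul, mul_inv, ← mul_mul_mul_comm]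
end
end
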